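/- For the root system of type Cₙ (for PSp(2n)) with simple coroots α₁∨ = ε₁, αᵢ∨ = −εᵢ₋₁ + εᵢ (2 ≤ i ≤ n) and fundamental weights ωᵢ = εᵢ + ⋯ + εₙ: if ν = Σνᵢωᵢ with all νᵢ ∈ {0, 1/2} satisfies ⟨β∨, ν⟩ < 1 for every coroot β∨ of level r₀ (where r₀ = n if n is odd and r₀ = n+1 if n is even), then ν₁ = ⋯ = ν_{⌊n/2⌋} = 0 and at most one of ν_{⌊n/2⌋+1},…,νₙ equals 1/2. -/

import Mathlib

/-
The coordinates of `ν = Σ cᵢωᵢ` are the partial sums `νⱼ = Σ_{i ≤ j} cᵢ`, so with `cᵢ ≥ 0` every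
`cᵢ` with `i ≤ j` is at most `νⱼ`. A level-`r₀` coroot `εᵢ + εₚ` with `i < ⌊n/2⌋ ≤ p` thus gives
`2cᵢ ≤ νᵢ + νₚ < 1`, forcing `cᵢ = 0`. The last coordinate `νₙ = Σ cᵢ` is below `1` (it is the
coroot `εₙ` for `n` odd, and bounded by `ε₁ + εₙ` for `n` even), so no two `cᵢ` can equal `1/2`.
-/

noncomputable def dotC (n : ℕ) (x y : Fin n → ℝ) : ℝ := ∑ i, x i * y i
noncomputable def eC (n k : ℕ) : Fin n → ℝ := fun j => if (j : ℕ) = k then 1 else 0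
/-- Fundamental weights of type Cₙ (for PSp(2n)), 0-based: `ωᵢ = εᵢ + ⋯ + εₙ`. -/
noncomputable def wC (n : ℕ) (i : Fin n) : Fin n → ℝ :=
  fun j => if (i : ℕ) ≤ (j : ℕ) then 1 else 0

section

variable {n : ℕ}

lemma dotC_eC (i : Fin n) (x : Fin n → ℝ) : dotC n (eC n i) x = x i := by
  simp [dotC, eC, Fin.val_inj]

lemma dotC_add_left (x y z : Fin n → ℝ) : dotC n (x + y) z = dotC n x z + dotC n y z := by
  simp only [dotC, Pi.add_apply, add_mul, Finset.sum_add_distrib]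

lemma dotC_eC_add_eC (i j : Fin n) (x : Fin n → ℝ) :
    dotC n (eC n i + eC n j) x = x i + x j := by
  rw [dotC_add_left, dotC_eC, dotC_eC]

lemma sum_smul_wC_apply (c : Fin n → ℝ) (j : Fin n) :
    (∑ i, c i • wC n i) j = ∑ i ∈ Finset.Iic j, c i := by
  simp only [Finset.sum_apply, Pi.smul_apply, wC, smul_eq_mul, mul_ite, mul_one, mul_zero]
  rw [← Finset.sum_filter]
  congr 1
  ext i
  rw [Finset.mem_filter, Finset.mem_Iic]
  simp only [Finset.mem_univ, true_and, Fin.le_def]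

lemma sum_smul_wC_apply_of_val_eq (c : Fin n → ℝ) {j : Fin n} (hj : (j : ℕ) = n - 1) :
    (∑ i, c i • wC n i) j = ∑ i, c i := by
  rw [sum_smul_wC_apply]
  congr 1
  exact Finset.eq_univ_of_forall fun i => Finset.mem_Iic.2 (Fin.le_def.2 (by omega))

variable {c : Fin n → ℝ} (hc : ∀ i, 0 ≤ c i)
include hc

lemma le_sum_smul_wC_apply {i j : Fin n} (hij : i ≤ j) : c i ≤ (∑ k, c k • wC n k) j := by
  rw [sum_smul_wC_apply]
  exact Finset.single_le_sum (fun k _ => hc k) (Finset.mem_Iic.2 hij)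

lemma sum_smul_wC_apply_nonneg (j : Fin n) : 0 ≤ (∑ k, c k • wC n k) j := by
  rw [sum_smul_wC_apply]
  exact Finset.sum_nonneg fun k _ => hc k

lemma sum_lt_one_of_dotC_lt_one (hn : 0 < n)
    (hodd : Odd n → dotC n (eC n (n - 1)) (∑ k, c k • wC n k) < 1)
    (heven : Even n → dotC n (eC n 0 + eC n (n - 1)) (∑ k, c k • wC n k) < 1) :
    ∑ k, c k < 1 := by
  let last : Fin n := ⟨n - 1, by omega⟩
  rw [← sum_smul_wC_apply_of_val_eq c (j := last) rfl]
  rcases Nat.even_or_odd n with he | ho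
  · have h := heven he
    rw [dotC_eC_add_eC ⟨0, hn⟩ last] at h
    linarith [sum_smul_wC_apply_nonneg hc ⟨0, hn⟩]
  · exact (dotC_eC last _).symm.trans_lt (hodd ho)

lemma eq_zero_of_dotC_eC_add_eC_lt_one {i p : Fin n} (hci : c i = 0 ∨ c i = 1 / 2)
    (hip : i ≤ p) (h : dotC n (eC n i + eC n p) (∑ k, c k • wC n k) < 1) : c i = 0 := by
  rw [dotC_eC_add_eC] at h
  have hi := le_sum_smul_wC_apply hc (le_refl i)
  have hp := le_sum_smul_wC_apply hc hip
  exact hci.resolve_right fun h' => by linarith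

end

theorem stmt_5_general (n : ℕ) (c : Fin n → ℝ)
    (hc : ∀ i, c i = 0 ∨ c i = 1/2)
    (ν : Fin n → ℝ) (hν : ν = ∑ i, c i • wC n i)
    (hodd : Odd n →
      (∀ k : ℕ, k < (n - 1) / 2 → dotC n (eC n k + eC n (n - 2 - k)) ν < 1) ∧
      dotC n (eC n (n - 1)) ν < 1)
    (heven : Even n → ∀ k : ℕ, k < n / 2 → dotC n (eC n k + eC n (n - 1 - k)) ν < 1) :
    (∀ i : Fin n, (i : ℕ) < n / 2 → c i = 0) ∧
    (∀ i j : Fin n, n / 2 ≤ (i : ℕ) → n / 2 ≤ (j : ℕ) →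
      c i = 1/2 → c j = 1/2 → i = j) := by
  subst hν
  have hc0 : ∀ i, 0 ≤ c i := fun i => by rcases hc i with h | h <;> norm_num [h]
  refine ⟨fun i hi => ?_, fun i j _ _ hi hj => ?_⟩
  · rcases Nat.even_or_odd n with he | ho
    · have := Nat.even_iff.1 he
      exact eq_zero_of_dotC_eC_add_eC_lt_one hc0 (hc i) (p := ⟨n - 1 - i, by omega⟩)
        (Fin.le_def.2 (by simp only; omega)) (heven he i hi)
    · have := Nat.odd_iff.1 ho
      exact eq_zero_of_dotC_eC_add_eC_lt_one hc0 (hc i) (p := ⟨n - 2 - i, by omega⟩)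
        (Fin.le_def.2 (by simp only; omega)) ((hodd ho).1 i (by omega))
  · have hsum : ∑ k, c k < 1 := sum_lt_one_of_dotC_lt_one hc0 i.pos (fun ho => (hodd ho).2)
      fun he => heven he 0 (by have := Nat.even_iff.1 he; have := i.pos; omega)
    by_contra hij
    have := Finset.add_le_sum (fun k _ => hc0 k) (Finset.mem_univ i) (Finset.mem_univ j) hij
    linarith

/-- Type Cₙ (PSp(2n)): if `ν = Σ cᵢωᵢ` with `cᵢ ∈ {0,1/2}` and `⟨β∨,ν⟩ < 1` for all
coroots `β∨` of the maximal level `r₀`, then `c₁ = ⋯ = c_{⌊n/2⌋} = 0` and at most one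
of the remaining coordinates equals 1/2. -/
theorem stmt_5 (n : ℕ) (hn : 0 < n) (c : Fin n → ℝ)
    (hc : ∀ i, c i = 0 ∨ c i = 1/2)
    (ν : Fin n → ℝ) (hν : ν = ∑ i, c i • wC n i)
    (hodd : Odd n →
      (∀ k : ℕ, k < (n - 1) / 2 → dotC n (eC n k + eC n (n - 2 - k)) ν < 1) ∧
      dotC n (eC n (n - 1)) ν < 1)
    (heven : Even n → ∀ k : ℕ, k < n / 2 → dotC n (eC n k + eC n (n - 1 - k)) ν < 1) :
    (∀ i : Fin n, (i : ℕ) < n / 2 → c i = 0) ∧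
    (∀ i j : Fin n, n / 2 ≤ (i : ℕ) → n / 2 ≤ (j : ℕ) →
      c i = 1/2 → c j = 1/2 → i = j) :=
  stmt_5_general n c hc ν hν hodd heven
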